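/- Let F be a finite set of function symbols with arities ar, T(F) the ground terms over F, < an irreflexive transitive relation on T(F) containing the subterm relation, and for each f ∈ F a relation <_f on ar(f)-tuples, such that: if f(b) < f(a) then f(b) ≤ a_i for some component a_i of a or b <_f a; and if every component of a tuple a is in the accessible part W(<), then a is in the accessible part W(<_f). Then for every f ∈ F and every ar(f)-tuple a: if a ∈ W(<_f) and every component of a is in W(<), then f(a) ∈ W(<). -/
import Mathlib


/-- Ground terms over a signature `F` with arity function `ar`,
modeled as the W-type of finitely branching trees. -/
def Term (F : Type) (ar : F → ℕ) : Type := WType (fun f : F => Fin (ar f))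

private theorem fz_aux {F : Type} [Fintype F] [DecidableEq F] {ar : F → ℕ}
    {lt : Term F ar → Term F ar → Prop}
    {ltf : ∀ f : F, (Fin (ar f) → Term F ar) → (Fin (ar f) → Term F ar) → Prop}
    (htrans : ∀ s t u, lt s t → lt t u → lt s u)
    (hsub : ∀ (f : F) (a : Fin (ar f) → Term F ar) (i : Fin (ar f)),
      lt (a i) (WType.mk f a))
    (hdec : ∀ (f : F) (a b : Fin (ar f) → Term F ar),
      lt (WType.mk f b) (WType.mk f a) →
      (∃ i, WType.mk f b = a i ∨ lt (WType.mk f b) (a i)) ∨ ltf f b a)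
    (hacc : ∀ (f : F) (a : Fin (ar f) → Term F ar),
      (∀ i, Acc lt (a i)) → Acc (ltf f) a) :
    ∀ (n : ℕ) (S : Finset F), (Finset.univ \ S).card ≤ n →
    ∀ T : Term F ar,
    (∀ (g : F) (d : Fin (ar g) → Term F ar), g ∈ S → lt (WType.mk g d) T →
       (∀ i, Acc lt (d i)) → Acc lt (WType.mk g d)) →
    ∀ (g : F) (d : Fin (ar g) → Term F ar), lt (WType.mk g d) T →
       (∀ i, Acc lt (d i)) → Acc lt (WType.mk g d) := by
  intro n
  induction n with
  | zero =>
    intro S hcard T hINV g d hlt hcomps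
    have hgS : g ∈ S := by
      by_contra hg
      have hmem : g ∈ Finset.univ \ S := by simp [hg]
      have := Finset.card_pos.mpr ⟨g, hmem⟩
      omega
    exact hINV g d hgS hlt hcomps
  | succ n ih =>
    intro S hcard T hINV g d hlt hcomps
    by_cases hgS : g ∈ S
    · exact hINV g d hgS hlt hcomps
    · have hcard' : (Finset.univ \ insert g S).card ≤ n := by
        have h1 : Finset.univ \ insert g S = (Finset.univ \ S).erase g := by
          ext x
          simp only [Finset.mem_sdiff, Finset.mem_insert, Finset.mem_erase,
            Finset.mem_univ, true_and]
          tauto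
        have hg' : g ∈ Finset.univ \ S := by simp [hgS]
        rw [h1, Finset.card_erase_of_mem hg']
        omega
      have key : ∀ d', Acc (ltf g) d' → lt (WType.mk g d') T →
          (∀ i, Acc lt (d' i)) → Acc lt (WType.mk g d') := by
        intro d' hacc'
        induction hacc' with
        | intro c hc ihc =>
          intro hltT hcomps'
          have SI : ∀ v : Term F ar, lt v (WType.mk g c) → Acc lt v := by
            intro v
            induction v with
            | mk j e ihe =>
              intro hv
              have hcompv : ∀ i, Acc lt (e i) :=
                fun i => ihe i (htrans _ _ _ (hsub j e i) hv)
              have hvT : lt (WType.mk j e) T := htrans _ _ _ hv hltT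
              by_cases hj : j = g
              · subst hj
                rcases hdec j c e hv with ⟨i, hi⟩ | hltf
                · rcases hi with heq | hlt'
                  · rw [heq]; exact hcomps' i
                  · exact (hcomps' i).inv hlt'
                · exact ihc e hltf hvT hcompv
              · by_cases hjS : j ∈ S
                · exact hINV j e hjS hvT hcompv
                · refine ih (insert g S) hcard' (WType.mk g c) ?_ j e hv hcompv
                  intro g' d'' hg' hlt'' hcomps''
                  rcases Finset.mem_insert.mp hg' with rfl | hg'S
                  · rcases hdec g' c d'' hlt'' with ⟨i, hi⟩ | hltf
                    · rcases hi with heq | hlt'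
                      · rw [heq]; exact hcomps' i
                      · exact (hcomps' i).inv hlt'
                    · exact ihc d'' hltf (htrans _ _ _ hlt'' hltT) hcomps''
                  · exact hINV g' d'' hg'S (htrans _ _ _ hlt'' hltT) hcomps''
          exact Acc.intro _ SI
      exact key d (hacc g d hcomps) hlt hcomps

theorem ferreira_zantema_acc_of_accf
    {F : Type} [Fintype F] (ar : F → ℕ)
    (lt : Term F ar → Term F ar → Prop)
    (ltf : ∀ f : F, (Fin (ar f) → Term F ar) → (Fin (ar f) → Term F ar) → Prop)
    (hirr : ∀ t, ¬ lt t t)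
    (htrans : ∀ s t u, lt s t → lt t u → lt s u)
    (hsub : ∀ (f : F) (a : Fin (ar f) → Term F ar) (i : Fin (ar f)),
      lt (a i) (WType.mk f a))
    (hdec : ∀ (f : F) (a b : Fin (ar f) → Term F ar),
      lt (WType.mk f b) (WType.mk f a) →
      (∃ i, WType.mk f b = a i ∨ lt (WType.mk f b) (a i)) ∨ ltf f b a)
    (hacc : ∀ (f : F) (a : Fin (ar f) → Term F ar),
      (∀ i, Acc lt (a i)) → Acc (ltf f) a) :
    ∀ (f : F) (a : Fin (ar f) → Term F ar),
      Acc (ltf f) a → (∀ i, Acc lt (a i)) → Acc lt (WType.mk f a) := by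
  haveI := Classical.decEq F
  intro f a haccf hcomps
  have key₀ : ∀ a', Acc (ltf f) a' → (∀ i, Acc lt (a' i)) → Acc lt (WType.mk f a') := by
    intro a' h
    induction h with
    | intro c hc ihc =>
      intro hcomps'
      have SI : ∀ v : Term F ar, lt v (WType.mk f c) → Acc lt v := by
        intro v
        induction v with
        | mk j e ihe =>
          intro hv
          have hcompv : ∀ i, Acc lt (e i) :=
            fun i => ihe i (htrans _ _ _ (hsub j e i) hv)
          by_cases hj : j = f
          · subst hj
            rcases hdec j c e hv with ⟨i, hi⟩ | hltf
            · rcases hi with heq | hlt'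
              · rw [heq]; exact hcomps' i
              · exact (hcomps' i).inv hlt'
            · exact ihc e hltf hcompv
          · refine fz_aux htrans hsub hdec hacc (Finset.univ \ {f}).card {f}
              (le_refl _) (WType.mk f c) ?_ j e hv hcompv
            intro g' d'' hg' hlt'' hcomps''
            have hgf : g' = f := Finset.mem_singleton.mp hg'
            subst hgf
            rcases hdec g' c d'' hlt'' with ⟨i, hi⟩ | hltf
            · rcases hi with heq | hlt'
              · rw [heq]; exact hcomps' i
              · exact (hcomps' i).inv hlt'
            · exact ihc d'' hltf hcomps''
      exact Acc.intro _ SI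
  exact key₀ a haccf hcomps
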